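/- (Soundness of the pivot-based spatial filter) Let P, Q and T be trajectories in V, and s and t time intervals with |s| > 0, |t| > 0, t ⊆ I(P) and I(Q) = s ⊆ t. Then |Dist(Q,P,t) − Dist(T,P,t)| ≤ 1 − |s|/|t| + (|s|/|t|) · Dist(Q,T,s). In particular, for any threshold r ≥ 0, if |Dist(Q,P,t) − Dist(T,P,t)| > 1 − |s|/|t| + (|s|/|t|) · r, then Dist(Q,T,s) > r. -/

import Mathlib

open MeasureTheory

structure Traj (V : Type*) where
  steps : List (V × ℤ × ℤ)
  nonempty : steps ≠ []
  valid : ∀ p ∈ steps, p.2.1 < p.2.2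
  chain : steps.Chain' (fun p q => p.2.2 = q.2.1 ∧ p.1 ≠ q.1)

/-- Length (Lebesgue measure) of a set of times. -/
noncomputable def ilen (A : Set ℝ) : ℝ := (volume A).toReal

/-- The time interval of a single trajectory step. -/
def stepInt {V : Type*} (p : V × ℤ × ℤ) : Set ℝ := Set.Icc (p.2.1 : ℝ) (p.2.2 : ℝ)

/-- The total interval `I(T)` of a trajectory: from its starting time to its ending time. -/
noncomputable def totalInt {V : Type*} (T : Traj V) : Set ℝ :=
  Set.Icc (((T.steps.head T.nonempty).2.1 : ℝ)) (((T.steps.getLast T.nonempty).2.2 : ℝ))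

/-- The spatio-temporal similarity `Sim(Q,T,s)`. -/
noncomputable def Sim {V : Type*} [MetricSpace V] (Q T : Traj V) (s : Set ℝ) : ℝ :=
  (1 / ilen s) *
    (Q.steps.map (fun q =>
      (T.steps.map (fun p =>
        ilen (s ∩ stepInt p ∩ stepInt q) * Real.exp (-(dist p.1 q.1)))).sum)).sum

/-- The spatio-temporal distance `Dist(Q,T,s) = 1 - Sim(Q,T,s)`. -/
noncomputable def TrajDist {V : Type*} [MetricSpace V] (Q T : Traj V) (s : Set ℝ) : ℝ :=
  1 - Sim Q T s

/-!
Write `W(X,Y,A) = |A| · Sim(X,Y,A)`. Refining every overlap `t ∩ p ∩ q` of a step `q` of `Q`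
and a step `p` of `P` along the steps `r` of `T` gives a triple sum, and on each cell
`e^{-d(p,q)} + e^{-d(r,q)} ≤ 1 + e^{-d(p,r)}`, by the triangle inequality and
`(1 - e^{-x}) (1 - e^{-y}) ≥ 0`. Summing over the cells gives
`W(Q,P,t) + W(Q,T,s) ≤ W(T,P,t) + |t|` whenever `s ⊆ t ⊆ I(P)`; together with the same
inequality for `Q` and `T` exchanged this is `|W(Q,P,t) - W(T,P,t)| ≤ |t| - W(Q,T,s)`, and
dividing by `|t|` gives the bound.
-/

open Set

theorem List.sum_map_sum_map_comm {α β M : Type*} [AddCommMonoid M] (l₁ : List α) (l₂ : List β)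
    (f : α → β → M) :
    (l₁.map fun a => (l₂.map fun b => f a b).sum).sum =
      (l₂.map fun b => (l₁.map fun a => f a b).sum).sum := by
  simpa using Multiset.sum_map_sum_map (l₁ : Multiset α) (l₂ : Multiset β) (f := f)

theorem ilen_nonneg (A : Set ℝ) : 0 ≤ ilen A := ENNReal.toReal_nonneg

theorem ilen_mono {A B : Set ℝ} (h : A ⊆ B) (hB : Bornology.IsBounded B) : ilen A ≤ ilen B :=
  measureReal_mono h hB.measure_lt_top.ne

theorem ilen_Icc_pos {x y : ℝ} (h : x < y) : 0 < ilen (Icc x y) := by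
  rw [ilen, Real.volume_Icc, ENNReal.toReal_ofReal (sub_nonneg.2 h.le)]
  exact sub_pos.2 h

theorem ilen_inter_Icc_add_ilen_inter_Icc (A : Set ℝ) {x y z : ℝ} (hxy : x ≤ y) (hyz : y ≤ z) :
    ilen (A ∩ Icc x y) + ilen (A ∩ Icc y z) = ilen (A ∩ Icc x z) := by
  have hle : A ∩ Icc x z ∩ Icc x y = A ∩ Icc x y := by
    rw [inter_assoc, Icc_inter_Icc, max_self, min_eq_right hyz]
  have hgt : (A ∩ Icc x z) \ Icc x y = A ∩ Ioc y z := by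
    ext u; simp only [mem_sdiff, mem_inter_iff, mem_Icc, mem_Ioc]; constructor
    · rintro ⟨⟨hA, hxu, huz⟩, hu⟩; exact ⟨hA, lt_of_not_ge fun h => hu ⟨hxu, h⟩, huz⟩
    · rintro ⟨hA, hyu, huz⟩; exact ⟨⟨hA, by linarith, huz⟩, fun h => by linarith [h.2]⟩
  have hfin : volume (A ∩ Icc x z) ≠ ⊤ :=
    ((Metric.isBounded_Icc x z).subset inter_subset_right).measure_lt_top.ne
  unfold ilen
  rw [← measureReal_def, ← measureReal_def, ← measureReal_def,
    ← measureReal_inter_add_sdiff (s := A ∩ Icc x z) measurableSet_Icc hfin, hle, hgt,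
    measureReal_congr ((ae_eq_refl A).inter Ioc_ae_eq_Icc)]

theorem Real.exp_neg_add_exp_neg_le {x y z : ℝ} (hx : 0 ≤ x) (hy : 0 ≤ y) (hz : z ≤ x + y) :
    Real.exp (-x) + Real.exp (-y) ≤ 1 + Real.exp (-z) := by
  have hx' : Real.exp (-x) ≤ 1 := Real.exp_le_one_iff.2 (neg_nonpos.2 hx)
  have hy' : Real.exp (-y) ≤ 1 := Real.exp_le_one_iff.2 (neg_nonpos.2 hy)
  have hxy : Real.exp (-x) * Real.exp (-y) ≤ Real.exp (-z) := by
    rw [← Real.exp_add]; exact Real.exp_le_exp.2 (by linarith)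
  nlinarith [mul_nonneg (sub_nonneg.2 hx') (sub_nonneg.2 hy')]

theorem exp_neg_dist_add_exp_neg_dist_le {V : Type*} [PseudoMetricSpace V] (x y z : V) :
    Real.exp (-dist x y) + Real.exp (-dist z y) ≤ 1 + Real.exp (-dist x z) :=
  Real.exp_neg_add_exp_neg_le dist_nonneg dist_nonneg (dist_triangle_right x z y)

theorem mul_add_sum_map_mul_le {ι : Type*} (l : List ι) {L e : ℝ} (m f g : ι → ℝ)
    (hm : ∀ k ∈ l, 0 ≤ m k) (hmL : (l.map m).sum ≤ L) (he : e ≤ 1)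
    (hfg : ∀ k ∈ l, e + f k ≤ 1 + g k) :
    L * e + (l.map fun k => m k * f k).sum ≤ L + (l.map fun k => m k * g k).sum := by
  have hf : (l.map fun k => m k * f k).sum ≤ (l.map fun k => m k * (1 - e) + m k * g k).sum :=
    List.sum_le_sum fun k hk => by nlinarith [hm k hk, hfg k hk]
  rw [List.sum_map_add, List.sum_map_mul_right] at hf
  nlinarith

section Steps

variable {V : Type*}

theorem head_fst_le_getLast_snd : ∀ (l : List (V × ℤ × ℤ)) (hl : l ≠ []),
    (∀ p ∈ l, p.2.1 < p.2.2) → l.IsChain (fun p q => p.2.2 = q.2.1) →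
    (l.head hl).2.1 ≤ (l.getLast hl).2.2
  | [p], _, hv, _ => (hv p (List.mem_singleton_self p)).le
  | p :: q :: l, _, hv, hc => by
    obtain ⟨hpq, hc⟩ := List.isChain_cons_cons.1 hc
    have hv' : ∀ r ∈ q :: l, r.2.1 < r.2.2 := fun r hr => hv r (List.mem_cons_of_mem p hr)
    have hq := head_fst_le_getLast_snd (q :: l) (List.cons_ne_nil q l) hv' hc
    rw [List.getLast_cons (List.cons_ne_nil q l)]
    have hp := hv p List.mem_cons_self
    simp only [List.head_cons] at hq ⊢
    omega

theorem sum_ilen_inter_stepInt_of_isChain (A : Set ℝ) :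
    ∀ (l : List (V × ℤ × ℤ)) (hl : l ≠ []),
    (∀ p ∈ l, p.2.1 < p.2.2) → l.IsChain (fun p q => p.2.2 = q.2.1) →
    (l.map fun p => ilen (A ∩ stepInt p)).sum =
      ilen (A ∩ Icc ((l.head hl).2.1 : ℝ) ((l.getLast hl).2.2 : ℝ))
  | [p], _, _, _ => by simp [stepInt]
  | p :: q :: l, _, hv, hc => by
    obtain ⟨hpq, hc⟩ := List.isChain_cons_cons.1 hc
    have hv' : ∀ r ∈ q :: l, r.2.1 < r.2.2 := fun r hr => hv r (List.mem_cons_of_mem p hr)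
    have hp : (p.2.1 : ℝ) ≤ p.2.2 := by exact_mod_cast (hv p List.mem_cons_self).le
    have hq : (p.2.2 : ℝ) ≤ ((q :: l).getLast (List.cons_ne_nil q l)).2.2 := by
      exact_mod_cast hpq ▸ head_fst_le_getLast_snd (q :: l) (List.cons_ne_nil q l) hv' hc
    rw [List.map_cons, List.sum_cons,
      sum_ilen_inter_stepInt_of_isChain A (q :: l) (List.cons_ne_nil q l) hv' hc,
      List.getLast_cons (List.cons_ne_nil q l), List.head_cons, List.head_cons, ← hpq]
    exact ilen_inter_Icc_add_ilen_inter_Icc A hp hq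

theorem sum_ilen_inter_stepInt (X : Traj V) (A : Set ℝ) :
    (X.steps.map fun p => ilen (A ∩ stepInt p)).sum = ilen (A ∩ totalInt X) :=
  sum_ilen_inter_stepInt_of_isChain A X.steps X.nonempty X.valid (X.chain.imp fun _ _ h => h.1)

theorem isBounded_stepInt (p : V × ℤ × ℤ) : Bornology.IsBounded (stepInt p) :=
  Metric.isBounded_Icc _ _

theorem sum_sum_ilen_inter_stepInt_le (X Y : Traj V) {t : Set ℝ}
    (ht : Bornology.IsBounded t) :
    (X.steps.map fun q => (Y.steps.map fun p => ilen (t ∩ stepInt p ∩ stepInt q)).sum).sum ≤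
      ilen t := by
  calc _ ≤ (X.steps.map fun q => ilen (t ∩ stepInt q)).sum := List.sum_le_sum fun q _ => by
          calc (Y.steps.map fun p => ilen (t ∩ stepInt p ∩ stepInt q)).sum
              = ilen (t ∩ stepInt q ∩ totalInt Y) := by
                rw [← sum_ilen_inter_stepInt]
                exact congrArg List.sum (List.map_congr_left fun p _ => by rw [inter_right_comm])
            _ ≤ ilen (t ∩ stepInt q) := ilen_mono inter_subset_left (ht.subset inter_subset_left)
    _ = ilen (t ∩ totalInt X) := sum_ilen_inter_stepInt X t
    _ ≤ ilen t := ilen_mono inter_subset_left ht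

end Steps

section Weights

variable {V : Type*} [MetricSpace V]

noncomputable def simWeight (X Y : Traj V) (A : Set ℝ) : ℝ :=
  (X.steps.map fun q => (Y.steps.map fun p =>
    ilen (A ∩ stepInt p ∩ stepInt q) * Real.exp (-dist p.1 q.1)).sum).sum

theorem Sim_eq_div (X Y : Traj V) (A : Set ℝ) : Sim X Y A = simWeight X Y A / ilen A :=
  one_div_mul_eq_div _ _

theorem simWeight_comm (X Y : Traj V) (A : Set ℝ) : simWeight X Y A = simWeight Y X A := by
  rw [simWeight, simWeight, List.sum_map_sum_map_comm]
  simp only [inter_right_comm A, dist_comm]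

noncomputable def tripleWeight (Q P T : Traj V) (t : Set ℝ) (f : V → V → V → ℝ) : ℝ :=
  (Q.steps.map fun q => (P.steps.map fun p => (T.steps.map fun r =>
    ilen (t ∩ stepInt p ∩ stepInt q ∩ stepInt r) * f q.1 p.1 r.1).sum).sum).sum

theorem simWeight_le_tripleWeight (P Q T : Traj V) {s t : Set ℝ} (hst : s ⊆ t)
    (htP : t ⊆ totalInt P) :
    simWeight Q T s ≤ tripleWeight Q P T t fun q _ r => Real.exp (-dist r q) := by
  refine List.sum_le_sum fun q _ => ?_
  rw [List.sum_map_sum_map_comm]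
  refine List.sum_le_sum fun r _ => ?_
  rw [List.sum_map_mul_right]
  refine mul_le_mul_of_nonneg_right ?_ (Real.exp_nonneg _)
  calc ilen (s ∩ stepInt r ∩ stepInt q)
      ≤ ilen (t ∩ stepInt q ∩ stepInt r ∩ totalInt P) :=
        ilen_mono (fun x hx => ⟨⟨⟨hst hx.1.1, hx.2⟩, hx.1.2⟩, htP (hst hx.1.1)⟩)
          ((isBounded_stepInt r).subset fun x hx => hx.1.2)
    _ = (P.steps.map fun p => ilen (t ∩ stepInt p ∩ stepInt q ∩ stepInt r)).sum := by
        rw [← sum_ilen_inter_stepInt]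
        exact congrArg List.sum (List.map_congr_left fun p _ => by ac_rfl)

theorem tripleWeight_le_simWeight (P Q T : Traj V) (t : Set ℝ) :
    (tripleWeight Q P T t fun _ p r => Real.exp (-dist p r)) ≤ simWeight T P t := by
  rw [tripleWeight, List.sum_map_sum_map_comm]
  simp only [List.sum_map_sum_map_comm (l₁ := Q.steps) (l₂ := T.steps)]
  rw [List.sum_map_sum_map_comm]
  refine List.sum_le_sum fun r _ => List.sum_le_sum fun p _ => ?_
  rw [List.sum_map_mul_right]
  refine mul_le_mul_of_nonneg_right ?_ (Real.exp_nonneg _)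
  calc (Q.steps.map fun q => ilen (t ∩ stepInt p ∩ stepInt q ∩ stepInt r)).sum
      = ilen (t ∩ stepInt p ∩ stepInt r ∩ totalInt Q) := by
        rw [← sum_ilen_inter_stepInt]
        exact congrArg List.sum (List.map_congr_left fun q _ => by ac_rfl)
    _ ≤ ilen (t ∩ stepInt p ∩ stepInt r) :=
        ilen_mono inter_subset_left ((isBounded_stepInt r).subset inter_subset_right)

theorem simWeight_add_tripleWeight_le (P Q T : Traj V) {t : Set ℝ}
    (ht : Bornology.IsBounded t) :
    simWeight Q P t + (tripleWeight Q P T t fun q _ r => Real.exp (-dist r q)) ≤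
      ilen t + tripleWeight Q P T t fun _ p r => Real.exp (-dist p r) := by
  have hpair : ∀ q p : V × ℤ × ℤ,
      ilen (t ∩ stepInt p ∩ stepInt q) * Real.exp (-dist p.1 q.1) +
          (T.steps.map fun r => ilen (t ∩ stepInt p ∩ stepInt q ∩ stepInt r) *
            Real.exp (-dist r.1 q.1)).sum ≤
        ilen (t ∩ stepInt p ∩ stepInt q) +
          (T.steps.map fun r => ilen (t ∩ stepInt p ∩ stepInt q ∩ stepInt r) *
            Real.exp (-dist p.1 r.1)).sum := fun q p =>
    mul_add_sum_map_mul_le T.steps _ _ _ (fun _ _ => ilen_nonneg _)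
      (by rw [sum_ilen_inter_stepInt]
          exact ilen_mono inter_subset_left ((isBounded_stepInt q).subset inter_subset_right))
      (Real.exp_le_one_iff.2 (neg_nonpos.2 dist_nonneg))
      fun r _ => exp_neg_dist_add_exp_neg_dist_le p.1 q.1 r.1
  calc _ ≤ (Q.steps.map fun q => (P.steps.map fun p => ilen (t ∩ stepInt p ∩ stepInt q) +
          (T.steps.map fun r => ilen (t ∩ stepInt p ∩ stepInt q ∩ stepInt r) *
            Real.exp (-dist p.1 r.1)).sum).sum).sum := by
        simp only [simWeight, tripleWeight, ← List.sum_map_add]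
        exact List.sum_le_sum fun q _ => List.sum_le_sum fun p _ => hpair q p
    _ ≤ _ := by
        simp only [tripleWeight, List.sum_map_add]
        exact add_le_add (sum_sum_ilen_inter_stepInt_le Q P ht) le_rfl

theorem simWeight_add_simWeight_le (P Q T : Traj V) {s t : Set ℝ} (hst : s ⊆ t)
    (htP : t ⊆ totalInt P) :
    simWeight Q P t + simWeight Q T s ≤ simWeight T P t + ilen t := by
  linarith [simWeight_le_tripleWeight P Q T hst htP, tripleWeight_le_simWeight P Q T t,
    simWeight_add_tripleWeight_le P Q T ((Metric.isBounded_Icc _ _).subset htP)]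

theorem abs_simWeight_sub_simWeight_le (P Q T : Traj V) {s t : Set ℝ} (hst : s ⊆ t)
    (htP : t ⊆ totalInt P) :
    |simWeight Q P t - simWeight T P t| ≤ ilen t - simWeight Q T s := by
  have hQ := simWeight_add_simWeight_le P Q T hst htP
  have hT := simWeight_add_simWeight_le P T Q hst htP
  rw [simWeight_comm T Q] at hT
  exact abs_sub_le_iff.2 ⟨by linarith, by linarith⟩

end Weights

theorem pivot_filter_sound_general {V : Type*} [MetricSpace V] (P Q T : Traj V)
    (a b c d : ℤ) (hab : a < b) (hcd : c < d)
    (htP : Set.Icc (c : ℝ) d ⊆ totalInt P)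
    (hst : Set.Icc (a : ℝ) b ⊆ Set.Icc (c : ℝ) d) :
    |TrajDist Q P (Set.Icc (c : ℝ) d) - TrajDist T P (Set.Icc (c : ℝ) d)| ≤
        1 - ilen (Set.Icc (a : ℝ) b) / ilen (Set.Icc (c : ℝ) d) +
          (ilen (Set.Icc (a : ℝ) b) / ilen (Set.Icc (c : ℝ) d)) *
            TrajDist Q T (Set.Icc (a : ℝ) b) ∧
      ∀ r : ℝ, 0 ≤ r →
        1 - ilen (Set.Icc (a : ℝ) b) / ilen (Set.Icc (c : ℝ) d) +
            (ilen (Set.Icc (a : ℝ) b) / ilen (Set.Icc (c : ℝ) d)) * r <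
          |TrajDist Q P (Set.Icc (c : ℝ) d) - TrajDist T P (Set.Icc (c : ℝ) d)| →
        r < TrajDist Q T (Set.Icc (a : ℝ) b) := by
  set s := Icc (a : ℝ) b
  set t := Icc (c : ℝ) d
  have hs : 0 < ilen s := ilen_Icc_pos (Int.cast_lt.2 hab)
  have ht : 0 < ilen t := ilen_Icc_pos (Int.cast_lt.2 hcd)
  have hlhs : TrajDist Q P t - TrajDist T P t =
      -((simWeight Q P t - simWeight T P t) / ilen t) := by
    rw [TrajDist, TrajDist, Sim_eq_div, Sim_eq_div]
    ring
  have hrhs : 1 - ilen s / ilen t + ilen s / ilen t * TrajDist Q T s =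
      (ilen t - simWeight Q T s) / ilen t := by
    rw [TrajDist, Sim_eq_div]
    field_simp
    ring
  have hbound : |TrajDist Q P t - TrajDist T P t| ≤
      1 - ilen s / ilen t + ilen s / ilen t * TrajDist Q T s := by
    rw [hlhs, abs_neg, abs_div, abs_of_pos ht, hrhs]
    exact div_le_div_of_nonneg_right (abs_simWeight_sub_simWeight_le P Q T hst htP) ht.le
  refine ⟨hbound, fun r _ hr => lt_of_mul_lt_mul_left ?_ (div_pos hs ht).le⟩
  linarith

/-- Soundness of the pivot-based spatial filter: Let `P`, `Q` and `T` be
trajectories in `V`, and `s = [a,b]`, `t = [c,d]` time intervals with `|s| > 0`, `|t| > 0`,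
`t ⊆ I(P)` and `I(Q) = s ⊆ t`. Then
`|Dist(Q,P,t) − Dist(T,P,t)| ≤ 1 − |s|/|t| + (|s|/|t|) · Dist(Q,T,s)`; in particular, for
any threshold `r ≥ 0`, if `|Dist(Q,P,t) − Dist(T,P,t)| > 1 − |s|/|t| + (|s|/|t|) · r`, then
`Dist(Q,T,s) > r`. -/
theorem pivot_filter_sound {V : Type*} [MetricSpace V] (P Q T : Traj V)
    (a b c d : ℤ) (hab : a < b) (hcd : c < d)
    (htP : Set.Icc (c : ℝ) d ⊆ totalInt P)
    (hQ : totalInt Q = Set.Icc (a : ℝ) b)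
    (hst : Set.Icc (a : ℝ) b ⊆ Set.Icc (c : ℝ) d) :
    |TrajDist Q P (Set.Icc (c : ℝ) d) - TrajDist T P (Set.Icc (c : ℝ) d)| ≤
        1 - ilen (Set.Icc (a : ℝ) b) / ilen (Set.Icc (c : ℝ) d) +
          (ilen (Set.Icc (a : ℝ) b) / ilen (Set.Icc (c : ℝ) d)) *
            TrajDist Q T (Set.Icc (a : ℝ) b) ∧
      ∀ r : ℝ, 0 ≤ r →
        1 - ilen (Set.Icc (a : ℝ) b) / ilen (Set.Icc (c : ℝ) d) +
            (ilen (Set.Icc (a : ℝ) b) / ilen (Set.Icc (c : ℝ) d)) * r <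
          |TrajDist Q P (Set.Icc (c : ℝ) d) - TrajDist T P (Set.Icc (c : ℝ) d)| →
        r < TrajDist Q T (Set.Icc (a : ℝ) b) :=
  pivot_filter_sound_general P Q T a b c d hab hcd htP hst
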